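/- For all nonnegative integers n, HB_n^{(ν,k)}(x) = (-1)^n \sum_{a=0}^{n} \left( \sum_{m=0}^{n-a} \frac{(-1)^{a+m} m!}{(m+1)^k} \binom{n}{a} S_2(n-a,m) \right) H_a^{(ν)}(x), where S_2(n,m) denotes the Stirling numbers of the second kind and H_a^{(ν)} the Hermite polynomials of order ν. -/

import Mathlib

open PowerSeries Finset

/-- The power series e^{-t}. -/
noncomputable def expNeg : PowerSeries ℝ := rescale (-1) (PowerSeries.exp ℝ)

/-- Li_k(1-e^{-t})/(1-e^{-t}) = ∑_{m≥0} (1-e^{-t})^m/(m+1)^k as a formal power series. -/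
noncomputable def pbGF (k : ℤ) : PowerSeries ℝ :=
  PowerSeries.mk fun n => ∑ m ∈ Finset.range (n + 1),
    (1 / ((m : ℝ) + 1) ^ k) * PowerSeries.coeff n ((1 - expNeg) ^ m)

/-- The power series e^{-ν t²/2}. -/
noncomputable def hermGF (ν : ℝ) : PowerSeries ℝ :=
  PowerSeries.mk fun n =>
    if Even n then (-ν / 2) ^ (n / 2) / (Nat.factorial (n / 2)) else 0

/-- Hermite and poly-Bernoulli mixed-type polynomials. -/
noncomputable def HB (ν : ℝ) (k : ℤ) (n : ℕ) (x : ℝ) : ℝ :=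
  (Nat.factorial n) *
    PowerSeries.coeff n (hermGF ν * pbGF k * rescale x (PowerSeries.exp ℝ))

/-- Poly-Bernoulli polynomials. -/
noncomputable def pB (k : ℤ) (n : ℕ) (x : ℝ) : ℝ :=
  (Nat.factorial n) * PowerSeries.coeff n (pbGF k * rescale x (PowerSeries.exp ℝ))

/-- Hermite polynomials of order ν. -/
noncomputable def Herm (ν : ℝ) (n : ℕ) (x : ℝ) : ℝ :=
  (Nat.factorial n) * PowerSeries.coeff n (hermGF ν * rescale x (PowerSeries.exp ℝ))

/-- Stirling numbers of the second kind. -/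
def S2 : ℕ → ℕ → ℕ
  | 0, 0 => 1
  | 0, _ + 1 => 0
  | _ + 1, 0 => 0
  | n + 1, m + 1 => (m + 1) * S2 n (m + 1) + S2 n m

/-! `(eᵗ - 1)ᵐ / m!` is the exponential generating function of `S₂(·, m)`: differentiating
`(eᵗ - 1)ᵐ⁺¹` reproduces the Stirling recurrence. Substituting `t ↦ -t`, the `j`-th coefficient of
`(1 - e⁻ᵗ)ᵐ` is `(-1)^(j+m) m! S₂(j, m) / j!`, so `pbGF k` is the exponential generating function of
the inner sums. Since `HB` is generated by `pbGF k` times the generating function of `Herm`, it is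
the binomial convolution of the two sequences. -/

open scoped Nat

theorem S2_eq_stirlingSecond : S2 = Nat.stirlingSecond := by
  funext n m
  induction n generalizing m with
  | zero => cases m <;> rfl
  | succ n ih =>
    cases m with
    | zero => rfl
    | succ m => rw [S2, Nat.stirlingSecond_succ_succ, ih, ih]

theorem neg_one_pow_sub_add {R : Type*} [CommRing R] {a n : ℕ} (h : a ≤ n)
    (m : ℕ) : (-1 : R) ^ (n - a + m) = (-1) ^ n * (-1) ^ (a + m) := by
  calc (-1 : R) ^ (n - a + m) = (-1) ^ (n - a + m) * ((-1) ^ a * (-1) ^ a) := by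
        rw [← pow_add, Even.neg_one_pow ⟨a, rfl⟩, mul_one]
    _ = (-1) ^ (n - a + a) * (-1) ^ (a + m) := by ring
    _ = (-1) ^ n * (-1) ^ (a + m) := by rw [Nat.sub_add_cancel h]

namespace PowerSeries

section CommSemiring

variable {R : Type*} [CommSemiring R]

theorem factorial_mul_coeff_mul (f g : R⟦X⟧) (n : ℕ) :
    (n ! : R) * coeff n (f * g) = ∑ a ∈ range (n + 1),
      n.choose a * (((n - a)! : R) * coeff (n - a) f) * ((a ! : R) * coeff a g) := by
  rw [mul_comm f, coeff_mul, Nat.sum_antidiagonal_eq_sum_range_succ_mk, mul_sum]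
  refine sum_congr rfl fun a ha => ?_
  rw [← Nat.choose_mul_factorial_mul_factorial (Nat.lt_succ_iff.mp (mem_range.mp ha))]
  push_cast
  ring

theorem factorial_succ_mul_coeff_succ (f : R⟦X⟧) (j : ℕ) :
    ((j + 1)! : R) * coeff (j + 1) f = j ! * coeff j (d⁄dX R f) := by
  rw [coeff_derivative, Nat.factorial_succ]
  push_cast
  ring

end CommSemiring

section Exp

variable {A : Type*} [CommRing A] [Algebra ℚ A]

theorem derivative_exp_sub_one_pow (m : ℕ) :
    d⁄dX A ((exp A - 1) ^ (m + 1)) = (m + 1) • ((exp A - 1) ^ (m + 1) + (exp A - 1) ^ m) := by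
  rw [derivative_pow, map_sub, derivative_exp, derivative_one, nsmul_eq_mul]
  push_cast
  ring

theorem factorial_mul_coeff_exp_sub_one_pow (j m : ℕ) :
    (j ! : A) * coeff j ((exp A - 1) ^ m) = m ! * Nat.stirlingSecond j m := by
  induction j generalizing m with
  | zero => cases m <;> simp
  | succ j ih =>
    cases m with
    | zero => simp [coeff_one]
    | succ m =>
      rw [factorial_succ_mul_coeff_succ, derivative_exp_sub_one_pow, map_nsmul, map_add,
        nsmul_eq_mul, mul_left_comm, mul_add, ih, ih, Nat.stirlingSecond_succ_succ,
        Nat.factorial_succ]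
      push_cast
      ring

end Exp

end PowerSeries

theorem factorial_mul_coeff_one_sub_expNeg_pow (j m : ℕ) :
    (j ! : ℝ) * coeff j ((1 - expNeg) ^ m) = (-1) ^ (j + m) * m ! * S2 j m := by
  have h_rescale : (1 - expNeg) ^ m = rescale (-1 : ℝ) ((1 - exp ℝ) ^ m) := by
    rw [map_pow, map_sub, map_one, expNeg]
  have h_neg : (1 - exp ℝ) ^ m = C ((-1) ^ m) * (exp ℝ - 1) ^ m := by
    rw [map_pow, map_neg, map_one, ← mul_pow, neg_one_mul, neg_sub]
  rw [h_rescale, h_neg, coeff_rescale, coeff_C_mul, S2_eq_stirlingSecond, pow_add, mul_left_comm,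
    mul_left_comm (j ! : ℝ), factorial_mul_coeff_exp_sub_one_pow]
  ring

theorem factorial_mul_coeff_pbGF (k : ℤ) (j : ℕ) :
    (j ! : ℝ) * coeff j (pbGF k) =
      ∑ m ∈ range (j + 1), (-1) ^ (j + m) * (m ! : ℝ) / ((m : ℝ) + 1) ^ k * S2 j m := by
  rw [pbGF, coeff_mk, mul_sum]
  refine sum_congr rfl fun m _ => ?_
  rw [mul_left_comm, factorial_mul_coeff_one_sub_expNeg_pow]
  ring

theorem HB_eq_sum_stirling_hermite (ν : ℝ) (k : ℤ) (n : ℕ) (x : ℝ) :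
    HB ν k n x = (-1) ^ n * ∑ a ∈ Finset.range (n + 1),
      (∑ m ∈ Finset.range (n - a + 1),
        ((-1) ^ (a + m) * (Nat.factorial m : ℝ) / ((m : ℝ) + 1) ^ k) *
          (n.choose a : ℝ) * (S2 (n - a) m : ℝ)) * Herm ν a x := by
  rw [HB, mul_comm (hermGF ν), mul_assoc, factorial_mul_coeff_mul, mul_sum]
  refine sum_congr rfl fun a ha => ?_
  rw [factorial_mul_coeff_pbGF, ← Herm, mul_sum, sum_mul, sum_mul, mul_sum]
  refine sum_congr rfl fun m _ => ?_
  rw [neg_one_pow_sub_add (Nat.lt_succ_iff.mp (mem_range.mp ha))]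
  ring
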